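/- arXiv:1006.3329 — 6 statements merged into one kernel-verified Lean document; each statement's English description precedes it below -/
import Mathlib

section
/- Let N be a positive integer, ω = 1/(4N), and S = ℤ \ { −N k² : k ∈ D } (so that λ_k + ωn ≠ 0 for all k ∈ D whenever n ∈ S). Then for every n ∈ S the series m_n = Σ_{k∈D} 1/(λ_k + ωn) converges absolutely, and sup_{n∈S} |m_n| < ∞; consequently there is a constant C such that Σ_{n∈S} | m_n q_n |² ≤ C Σ_{n∈S} |q_n|² for every square-summable family (q_n)_{n∈S} of complex numbers. -/
open MeasureTheory Set Filter
open scoped Real Topology ENNReal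

noncomputable section

/-- `lam k = k²/4`, the eigenvalues of the Dirichlet Laplacian on `[-π,π]`. -/
def lam (k : ℕ) : ℝ := (k : ℝ) ^ 2 / 4

/-- Partial sums (over odd `k < K`) of the series defining `U q`. -/
def partialU (q : ℝ → ℂ) (K : ℕ) (t : ℝ) : ℂ :=
  ∑ k ∈ (Finset.range K).filter (fun k => Odd k),
    ∫ s in (0:ℝ)..t, q s * Complex.exp (-Complex.I * (lam k : ℂ) * ((t : ℂ) - (s : ℂ)))

/-- `Uq` is the limit in `L²((0,T),ℂ)` of the partial sums `partialU q K`. -/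
def IsULim (T : ℝ) (q Uq : ℝ → ℂ) : Prop :=
  Tendsto (fun K => eLpNorm (fun t => partialU q K t - Uq t) 2
    (volume.restrict (Ioc 0 T))) atTop (nhds 0)

/-- `q` is an `H¹(0,T)` function with derivative `g`. -/
def IsH1 (T : ℝ) (q g : ℝ → ℂ) : Prop :=
  MemLp g 2 (volume.restrict (Ioc 0 T)) ∧
  ∀ t ∈ Icc (0:ℝ) T, q t = q 0 + ∫ s in (0:ℝ)..t, g s

/-- The `L²(0,T)` norm of a function. -/
def L2norm (T : ℝ) (q : ℝ → ℂ) : ℝ := (eLpNorm q 2 (volume.restrict (Ioc 0 T))).toReal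

/-- The `H¹(0,T)` norm of an `H¹` function `q` with derivative `g`. -/
def H1norm (T : ℝ) (q g : ℝ → ℂ) : ℝ := Real.sqrt ((L2norm T q) ^ 2 + (L2norm T g) ^ 2)

/-!
Since `λ_k + ωn = (Nk² + n)/(4N)`, the `k`-th term is `4N/|a_k|` with `a_k = Nk² + n` a nonzero
integer for odd `k` when `n ∈ S`. If `k₀` minimises `|a_k|` over odd `k`, then
`(k - k₀)² ≤ |k² - k₀²| ≤ |a_k - a_{k₀}| ≤ 2|a_k|`, so the term is at most `12N/((k - k₀)² + 1)`
and the series is dominated by `12N ∑_{j ∈ ℤ} 1/(j² + 1)`, uniformly in `n`. A bounded multiplier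
acts boundedly on `ℓ²`.
-/

theorem Summable.of_abs_le_mul_comp_injective {ι κ : Type*} {f : ι → ℝ} {g : κ → ℝ} {e : ι → κ}
    (hg : Summable g) (he : Function.Injective e) {C : ℝ} (hf : ∀ i, |f i| ≤ C * g (e i)) :
    Summable fun i => |f i| :=
  ((hg.comp_injective he).mul_left C).of_nonneg_of_le (fun _ => abs_nonneg _) hf

theorem tsum_abs_le_mul_tsum_of_injective {ι κ : Type*} {f : ι → ℝ} {g : κ → ℝ} {e : ι → κ}
    (hg : Summable g) (hg₀ : ∀ j, 0 ≤ g j) (he : Function.Injective e) {C : ℝ} (hC : 0 ≤ C)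
    (hf : ∀ i, |f i| ≤ C * g (e i)) :
    ∑' i, |f i| ≤ C * ∑' j, g j :=
  calc ∑' i, |f i| ≤ ∑' i, C * g (e i) :=
        (hg.of_abs_le_mul_comp_injective he hf).tsum_le_tsum hf ((hg.comp_injective he).mul_left C)
    _ = C * ∑' i, g (e i) := tsum_mul_left
    _ ≤ C * ∑' j, g j := mul_le_mul_of_nonneg_left (tsum_comp_le_tsum_of_inj hg hg₀ he) hC

theorem summable_one_div_int_sq_add_one : Summable fun m : ℤ => 1 / ((m : ℝ) ^ 2 + 1) := by
  refine (Real.summable_one_div_int_pow.mpr one_lt_two).of_norm_bounded_eventually ?_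
  filter_upwards [eventually_cofinite_ne 0] with m hm₀
  have hm : (0 : ℝ) < (m : ℝ) ^ 2 := by positivity
  rw [Real.norm_of_nonneg (by positivity)]
  gcongr
  linarith

theorem Summable.norm_mul_sq_and_tsum_le_of_norm_le {ι R : Type*} [SeminormedRing R]
    {a q : ι → R} {M : ℝ} (ha : ∀ i, ‖a i‖ ≤ M) (hq : Summable fun i => ‖q i‖ ^ 2) :
    Summable (fun i => ‖a i * q i‖ ^ 2) ∧
      ∑' i, ‖a i * q i‖ ^ 2 ≤ M ^ 2 * ∑' i, ‖q i‖ ^ 2 := by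
  have hle : ∀ i, ‖a i * q i‖ ^ 2 ≤ M ^ 2 * ‖q i‖ ^ 2 := fun i =>
    calc ‖a i * q i‖ ^ 2 ≤ (‖a i‖ * ‖q i‖) ^ 2 := by gcongr; exact norm_mul_le _ _
      _ ≤ (M * ‖q i‖) ^ 2 := by gcongr; exact ha i
      _ = M ^ 2 * ‖q i‖ ^ 2 := mul_pow _ _ _
  have hsum : Summable fun i => ‖a i * q i‖ ^ 2 :=
    (hq.mul_left _).of_nonneg_of_le (fun _ => by positivity) hle
  exact ⟨hsum, (hsum.tsum_le_tsum hle (hq.mul_left _)).trans_eq tsum_mul_left⟩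

theorem Int.exists_forall_abs_le_abs {α : Type*} [Nonempty α] (f : α → ℤ) :
    ∃ a, ∀ b, |f a| ≤ |f b| :=
  ⟨Function.argmin (fun a => (f a).natAbs), fun b => by
    simpa only [Int.natCast_natAbs] using
      Int.ofNat_le.mpr (Function.argmin_le (fun a => (f a).natAbs) b)⟩

theorem sq_sub_le_two_mul_abs {N n : ℤ} (hN : 1 ≤ N) {k k₀ : ℕ}
    (hmin : |N * k₀ ^ 2 + n| ≤ |N * k ^ 2 + n|) :
    ((k : ℤ) - k₀) ^ 2 ≤ 2 * |N * k ^ 2 + n| :=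
  calc ((k : ℤ) - k₀) ^ 2 ≤ |(k : ℤ) ^ 2 - k₀ ^ 2| := by
        have hk : (0 : ℤ) ≤ k := by positivity
        have hk₀ : (0 : ℤ) ≤ k₀ := by positivity
        rcases le_total (k : ℤ) k₀ with h | h
        · rw [abs_of_nonpos (by nlinarith)]; nlinarith
        · rw [abs_of_nonneg (by nlinarith)]; nlinarith
    _ ≤ N * |(k : ℤ) ^ 2 - k₀ ^ 2| := le_mul_of_one_le_left (abs_nonneg _) hN
    _ = |(N * k ^ 2 + n) - (N * k₀ ^ 2 + n)| := by
        rw [show (N * k ^ 2 + n) - (N * k₀ ^ 2 + n) = N * ((k : ℤ) ^ 2 - k₀ ^ 2) by ring,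
          abs_mul, abs_of_pos (by omega : 0 < N)]
    _ ≤ |N * k ^ 2 + n| + |N * k₀ ^ 2 + n| := abs_sub _ _
    _ ≤ 2 * |N * k ^ 2 + n| := by linarith

theorem lam_add_div_mul_eq {N : ℕ} (hN : 0 < N) (k : ℕ) (n : ℤ) :
    lam k + 1 / (4 * (N : ℝ)) * n = (((N : ℤ) * k ^ 2 + n : ℤ) : ℝ) / (4 * N) := by
  unfold lam
  push_cast
  field_simp

theorem exists_abs_one_div_lam_add_le {N : ℕ} (hN : 0 < N) {n : ℤ}
    (hn : ∀ k : ℕ, Odd k → n ≠ -(N : ℤ) * (k : ℤ) ^ 2) :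
    ∃ k₀ : ℤ, ∀ k : {k : ℕ // Odd k},
      |1 / (lam k + 1 / (4 * (N : ℝ)) * n)| ≤ 12 * N * (1 / ((((k : ℕ) - k₀ : ℤ) : ℝ) ^ 2 + 1)) := by
  have : Nonempty {k : ℕ // Odd k} := ⟨⟨1, odd_one⟩⟩
  obtain ⟨k₀, hk₀⟩ :=
    Int.exists_forall_abs_le_abs fun k : {k : ℕ // Odd k} => (N : ℤ) * k.1 ^ 2 + n
  refine ⟨k₀.1, fun k => ?_⟩
  have ha₀ : (N : ℤ) * k.1 ^ 2 + n ≠ 0 := fun h => hn k k.2 (by linarith)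
  have ha : (1 : ℝ) ≤ |(((N : ℤ) * k.1 ^ 2 + n : ℤ) : ℝ)| := by
    rw [← Int.cast_abs]
    exact_mod_cast Int.one_le_abs ha₀
  have hd : ((((k : ℕ) - k₀ : ℤ) : ℝ)) ^ 2 ≤ 2 * |(((N : ℤ) * k.1 ^ 2 + n : ℤ) : ℝ)| := by
    rw [← Int.cast_abs]
    exact_mod_cast sq_sub_le_two_mul_abs (by exact_mod_cast hN) (hk₀ k)
  have hN' : (0 : ℝ) < N := by exact_mod_cast hN
  rw [lam_add_div_mul_eq hN, one_div_div, abs_div, abs_of_pos (by positivity),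
    div_le_iff₀ (by linarith), mul_one_div, div_mul_eq_mul_div,
    le_div_iff₀ (by positivity)]
  nlinarith

/-- Let `N` be a positive integer, `ω = 1/(4N)`, and
`S = ℤ \ {−Nk² : k ∈ D}` (so that `λ_k + ωn ≠ 0` for all `k ∈ D` whenever `n ∈ S`).
Then for every `n ∈ S` the series `m_n = ∑_{k ∈ D} 1/(λ_k + ωn)` converges absolutely and
`sup_{n ∈ S} |m_n| < ∞`; consequently there is a constant `C` such that
`∑_{n ∈ S} |m_n q_n|² ≤ C ∑_{n ∈ S} |q_n|²` for every square-summable family `(q_n)_{n ∈ S}`. -/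
theorem stmt4 (N : ℕ) (hN : 0 < N) :
    let ω : ℝ := 1 / (4 * (N : ℝ))
    let S : Set ℤ := {n : ℤ | ∀ k : ℕ, Odd k → n ≠ -(N : ℤ) * (k : ℤ) ^ 2}
    let m : ℤ → ℝ := fun n => ∑' k : {k : ℕ // Odd k}, 1 / (lam k.1 + ω * (n : ℝ))
    (∀ n ∈ S, Summable (fun k : {k : ℕ // Odd k} => |1 / (lam k.1 + ω * (n : ℝ))|)) ∧
    (∃ M : ℝ, ∀ n ∈ S, |m n| ≤ M) ∧
    ∃ C : ℝ, ∀ q : ℤ → ℂ, Summable (fun n : S => ‖q n.1‖ ^ 2) →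
      Summable (fun n : S => ‖(m n.1 : ℂ) * q n.1‖ ^ 2) ∧
      (∑' n : S, ‖(m n.1 : ℂ) * q n.1‖ ^ 2) ≤ C * ∑' n : S, ‖q n.1‖ ^ 2 := by
  intro ω S m
  set M := 12 * (N : ℝ) * ∑' j : ℤ, 1 / ((j : ℝ) ^ 2 + 1)
  have hinj (k₀ : ℤ) : Function.Injective fun k : {k : ℕ // Odd k} => (k : ℤ) - k₀ :=
    fun k k' h => Subtype.ext (by simpa using h)
  have hsummable (n) (hn : n ∈ S) :
      Summable fun k : {k : ℕ // Odd k} => |1 / (lam k.1 + ω * (n : ℝ))| := by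
    obtain ⟨k₀, hk₀⟩ := exists_abs_one_div_lam_add_le hN hn
    exact summable_one_div_int_sq_add_one.of_abs_le_mul_comp_injective (hinj k₀) hk₀
  have hbound (n) (hn : n ∈ S) : |m n| ≤ M := by
    obtain ⟨k₀, hk₀⟩ := exists_abs_one_div_lam_add_le hN hn
    calc |m n| ≤ ∑' k : {k : ℕ // Odd k}, |1 / (lam k.1 + ω * (n : ℝ))| := by
          simpa only [Real.norm_eq_abs] using norm_tsum_le_tsum_norm
            (f := fun k : {k : ℕ // Odd k} => 1 / (lam k.1 + ω * (n : ℝ)))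
            (by simpa only [Real.norm_eq_abs] using hsummable n hn)
      _ ≤ M := tsum_abs_le_mul_tsum_of_injective summable_one_div_int_sq_add_one
          (fun _ => by positivity) (hinj k₀) (by positivity) hk₀
  refine ⟨hsummable, ⟨M, hbound⟩, M ^ 2, fun q hq => ?_⟩
  refine Summable.norm_mul_sq_and_tsum_le_of_norm_le (fun n : S => ?_) hq
  rw [Complex.norm_real, Real.norm_eq_abs]
  exact hbound n n.2
end
end

section
/- For every T > 0, every q ∈ L²((0,T),ℂ), and every t ∈ [0,T], one has Σ_{k∈D} | ∫₀^t q(s) e^{iλ_k s} ds |² ≤ (T + 8π) ∫₀^t |q(s)|² ds. -/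
open MeasureTheory Set Filter
open scoped Real Topology ENNReal

noncomputable section

open scoped ComplexConjugate InnerProductSpace

/-
Write `e_k s = exp (i λ_k s)`. The coefficients `∫₀ᵗ q e_k` are the inner products
`⟪conj e_k, q⟫` in `L²(0,t)`, so the claim is a Bessel inequality for the almost orthogonal
family `(conj e_k)_{k odd}`.
By duality it suffices to bound `‖∑ c_k conj e_k‖² ≤ (t + 8) ∑ |c_k|²`, and by Schur's test it
suffices to bound the row sums of the absolute Gram matrix by `t + 8`. The diagonal entries are `t`;
off the diagonal, integrating the oscillating exponential gives
`|⟪e_j, e_k⟫| ≤ 2 / |λ_j - λ_k| ≤ 8 / (j - k)²`, and since `j - k` runs through distinct nonzero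
even integers these sum to at most `8 · π² / 12 ≤ 8`.
-/

theorem MeasureTheory.MemLp.inner_toLp_toLp {α 𝕜 : Type*} [MeasurableSpace α] {μ : Measure α}
    [RCLike 𝕜] {f g : α → 𝕜} (hf : MemLp f 2 μ) (hg : MemLp g 2 μ) :
    ⟪hf.toLp f, hg.toLp g⟫_𝕜 = ∫ a, conj (f a) * g a ∂μ := by
  rw [L2.inner_def]
  refine integral_congr_ae ?_
  filter_upwards [hf.coeFn_toLp, hg.coeFn_toLp] with a hfa hga
  rw [hfa, hga, RCLike.inner_apply']

theorem MeasureTheory.MemLp.norm_toLp_sq {α 𝕜 : Type*} [MeasurableSpace α] {μ : Measure α}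
    [RCLike 𝕜] {f : α → 𝕜} (hf : MemLp f 2 μ) :
    ‖hf.toLp f‖ ^ 2 = ∫ a, ‖f a‖ ^ 2 ∂μ := by
  rw [← inner_self_eq_norm_sq (𝕜 := 𝕜), hf.inner_toLp_toLp hf, ← integral_re]
  · simp_rw [RCLike.conj_mul, ← RCLike.ofReal_pow, RCLike.ofReal_re]
  · exact (L2.integrable_inner (hf.toLp f) (hf.toLp f)).congr
      (by filter_upwards [hf.coeFn_toLp] with a ha; rw [ha, RCLike.inner_apply'])

theorem Finset.sum_sum_mul_mul_le_of_row_sum_le {ι : Type*} (F : Finset ι) (x : ι → ℝ)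
    {a : ι → ι → ℝ} (ha : ∀ j k, 0 ≤ a j k) (ha_symm : ∀ j k, a j k = a k j) {M : ℝ}
    (hrow : ∀ j ∈ F, ∑ k ∈ F, a j k ≤ M) :
    ∑ j ∈ F, ∑ k ∈ F, x j * x k * a j k ≤ M * ∑ j ∈ F, x j ^ 2 := by
  have hhalf : ∑ j ∈ F, ∑ k ∈ F, x j ^ 2 * a j k ≤ M * ∑ j ∈ F, x j ^ 2 := by
    rw [Finset.mul_sum]
    refine Finset.sum_le_sum fun j hj => ?_
    rw [← Finset.mul_sum, mul_comm]
    exact mul_le_mul_of_nonneg_right (hrow j hj) (sq_nonneg _)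
  have hswap : ∑ j ∈ F, ∑ k ∈ F, x k ^ 2 * a j k = ∑ j ∈ F, ∑ k ∈ F, x j ^ 2 * a j k := by
    rw [Finset.sum_comm]
    simp_rw [ha_symm]
  calc ∑ j ∈ F, ∑ k ∈ F, x j * x k * a j k
      ≤ ∑ j ∈ F, ∑ k ∈ F, (x j ^ 2 * a j k + x k ^ 2 * a j k) / 2 := by
        gcongr with j _ k _
        nlinarith [ha j k, mul_nonneg (ha j k) (sq_nonneg (x j - x k))]
    _ = (∑ j ∈ F, ∑ k ∈ F, x j ^ 2 * a j k + ∑ j ∈ F, ∑ k ∈ F, x k ^ 2 * a j k) / 2 := by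
        simp only [← Finset.sum_div, ← Finset.sum_add_distrib]
    _ ≤ M * ∑ j ∈ F, x j ^ 2 := by rw [hswap]; linarith

section AlmostOrthogonal

variable {𝕜 E ι : Type*} [RCLike 𝕜] [NormedAddCommGroup E] [InnerProductSpace 𝕜 E]

theorem norm_sum_smul_sq_le_of_row_sum_le (F : Finset ι) (v : ι → E) {M : ℝ}
    (hrow : ∀ j ∈ F, ∑ k ∈ F, ‖⟪v j, v k⟫_𝕜‖ ≤ M) (c : ι → 𝕜) :
    ‖∑ k ∈ F, c k • v k‖ ^ 2 ≤ M * ∑ k ∈ F, ‖c k‖ ^ 2 := by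
  have hgram : ⟪∑ k ∈ F, c k • v k, ∑ k ∈ F, c k • v k⟫_𝕜
      = ∑ j ∈ F, ∑ k ∈ F, conj (c j) * c k * ⟪v j, v k⟫_𝕜 := by
    simp_rw [sum_inner, inner_smul_left, inner_sum, inner_smul_right, Finset.mul_sum, mul_assoc]
  calc ‖∑ k ∈ F, c k • v k‖ ^ 2
      ≤ ‖⟪∑ k ∈ F, c k • v k, ∑ k ∈ F, c k • v k⟫_𝕜‖ := by
        rw [← inner_self_eq_norm_sq (𝕜 := 𝕜)]
        exact RCLike.re_le_norm _
    _ ≤ ∑ j ∈ F, ∑ k ∈ F, ‖c j‖ * ‖c k‖ * ‖⟪v j, v k⟫_𝕜‖ := by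
        rw [hgram]
        refine (norm_sum_le _ _).trans (Finset.sum_le_sum fun j _ => ?_)
        refine (norm_sum_le _ _).trans (le_of_eq (Finset.sum_congr rfl fun k _ => ?_))
        rw [norm_mul, norm_mul, RCLike.norm_conj]
    _ ≤ M * ∑ k ∈ F, ‖c k‖ ^ 2 :=
        F.sum_sum_mul_mul_le_of_row_sum_le _ (fun _ _ => norm_nonneg _)
          (fun j k => by rw [norm_inner_symm]) hrow

theorem sum_norm_inner_sq_le_of_row_sum_le (F : Finset ι) (v : ι → E) {M : ℝ} (hM : 0 ≤ M)
    (hrow : ∀ j ∈ F, ∑ k ∈ F, ‖⟪v j, v k⟫_𝕜‖ ≤ M) (x : E) :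
    ∑ k ∈ F, ‖⟪v k, x⟫_𝕜‖ ^ 2 ≤ M * ‖x‖ ^ 2 := by
  set S := ∑ k ∈ F, ‖⟪v k, x⟫_𝕜‖ ^ 2
  set w := ∑ k ∈ F, ⟪v k, x⟫_𝕜 • v k
  have hw : ⟪w, x⟫_𝕜 = S := by
    simp only [w, S, sum_inner, inner_smul_left, RCLike.conj_mul, map_sum, map_pow]
  have hS : S ^ 2 ≤ M * S * ‖x‖ ^ 2 := by
    calc S ^ 2 = ‖⟪w, x⟫_𝕜‖ ^ 2 := by
          rw [hw, RCLike.norm_ofReal, abs_of_nonneg (by positivity)]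
      _ ≤ ‖w‖ ^ 2 * ‖x‖ ^ 2 := by
          rw [← mul_pow]; gcongr; exact norm_inner_le_norm _ _
      _ ≤ M * S * ‖x‖ ^ 2 := by
          gcongr; exact norm_sum_smul_sq_le_of_row_sum_le F v hrow _
  rcases (show 0 ≤ S by positivity).eq_or_lt with hS0 | hSpos
  · rw [← hS0]; positivity
  · nlinarith

end AlmostOrthogonal

theorem hasSum_int_one_div_sq : HasSum (fun m : ℤ => 1 / (m : ℝ) ^ 2) (π ^ 2 / 3) := by
  have h := HasSum.of_nat_of_neg (f := fun m : ℤ => 1 / (m : ℝ) ^ 2) hasSum_zeta_two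
    (by simpa using hasSum_zeta_two)
  rw [Int.cast_zero, zero_pow two_ne_zero, div_zero, sub_zero] at h
  rwa [show π ^ 2 / 3 = π ^ 2 / 6 + π ^ 2 / 6 by ring]

theorem sum_erase_one_div_sub_sq_le_one (F : Finset {k : ℕ // Odd k}) (j : {k : ℕ // Odd k}) :
    ∑ k ∈ F.erase j, 1 / ((j.1 : ℝ) - k.1) ^ 2 ≤ 1 := by
  -- odd `k` is determined by `k / 2`, and `j - k = 2 (j / 2 - k / 2)`
  set half : {k : ℕ // Odd k} → ℤ := fun k => ((j.1 / 2 : ℕ) : ℤ) - ((k.1 / 2 : ℕ) : ℤ)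
  have hhalf : ∀ k : {k : ℕ // Odd k}, (j.1 : ℝ) - k.1 = 2 * (half k : ℝ) := by
    intro k
    have hj := congrArg (Nat.cast (R := ℝ)) (Nat.two_mul_div_two_add_one_of_odd j.2)
    have hk := congrArg (Nat.cast (R := ℝ)) (Nat.two_mul_div_two_add_one_of_odd k.2)
    push_cast at hj hk
    simp only [half, Int.cast_sub, Int.cast_natCast]
    linarith
  have hinj : Function.Injective half := by
    intro k k' h
    have := (hhalf k).trans ((congrArg (fun m : ℤ => 2 * (m : ℝ)) h).trans (hhalf k').symm)
    exact Subtype.ext (by exact_mod_cast (sub_right_injective this))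
  set g : ℤ → ℝ := fun m => 1 / (2 * (m : ℝ)) ^ 2
  have hg : HasSum g (π ^ 2 / 12) := by
    have h := hasSum_int_one_div_sq.mul_left (1 / 4)
    rw [show 1 / 4 * (π ^ 2 / 3) = π ^ 2 / 12 by ring] at h
    refine h.congr_fun fun m => ?_
    simp only [g]
    ring
  calc ∑ k ∈ F.erase j, 1 / ((j.1 : ℝ) - k.1) ^ 2
      = ∑ k ∈ F.erase j, g (half k) := by simp only [g, hhalf]
    _ ≤ ∑' k, g (half k) :=
        Summable.sum_le_tsum _ (fun _ _ => by positivity) (hg.summable.comp_injective hinj)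
    _ ≤ ∑' m, g m := tsum_comp_le_tsum_of_inj hg.summable (fun _ => by positivity) hinj
    _ = π ^ 2 / 12 := hg.tsum_eq
    _ ≤ 1 := by nlinarith [Real.pi_lt_d2, Real.pi_pos]

theorem norm_integral_exp_I_mul_le {r : ℝ} (hr : r ≠ 0) (a b : ℝ) :
    ‖∫ s in a..b, Complex.exp (Complex.I * r * s)‖ ≤ 2 / |r| := by
  have hc : Complex.I * r ≠ 0 := mul_ne_zero Complex.I_ne_zero (Complex.ofReal_ne_zero.mpr hr)
  rw [integral_exp_mul_complex hc, norm_div, norm_mul, Complex.norm_I, Complex.norm_real,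
    Real.norm_eq_abs, one_mul]
  gcongr
  calc ‖Complex.exp (Complex.I * r * b) - Complex.exp (Complex.I * r * a)‖
      ≤ ‖Complex.exp (Complex.I * ↑(r * b))‖ + ‖Complex.exp (Complex.I * ↑(r * a))‖ := by
        push_cast; simp only [mul_assoc]; exact norm_sub_le _ _
    _ = 2 := by rw [Complex.norm_exp_I_mul_ofReal, Complex.norm_exp_I_mul_ofReal]; norm_num

theorem lam_sub_lam (j k : ℕ) : lam j - lam k = ((j : ℝ) - k) * (j + k) / 4 := by
  simp only [lam]; ring

theorem norm_integral_exp_lam_sub_le {j k : ℕ} (hjk : j ≠ k) (a b : ℝ) :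
    ‖∫ s in a..b, Complex.exp (Complex.I * ↑(lam j - lam k) * s)‖ ≤ 8 / ((j : ℝ) - k) ^ 2 := by
  have hsub : (j : ℝ) - k ≠ 0 := sub_ne_zero.mpr (Nat.cast_injective.ne hjk)
  have hgap : ((j : ℝ) - k) ^ 2 / 4 ≤ |lam j - lam k| := by
    rw [lam_sub_lam, abs_div, abs_mul, abs_of_nonneg (by positivity : (0 : ℝ) ≤ j + k),
      abs_of_pos (by norm_num : (0 : ℝ) < 4), ← sq_abs]
    have hjk_le : |(j : ℝ) - k| ≤ j + k := abs_sub_le_iff.mpr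
      ⟨by linarith [(k.cast_nonneg : (0 : ℝ) ≤ k)], by linarith [(j.cast_nonneg : (0 : ℝ) ≤ j)]⟩
    rw [sq]
    gcongr
  calc ‖∫ s in a..b, Complex.exp (Complex.I * ↑(lam j - lam k) * s)‖
      ≤ 2 / |lam j - lam k| := norm_integral_exp_I_mul_le
        (abs_pos.mp (lt_of_lt_of_le (by positivity) hgap)) a b
    _ ≤ 2 / (((j : ℝ) - k) ^ 2 / 4) := by gcongr
    _ = 8 / ((j : ℝ) - k) ^ 2 := by field_simp; norm_num

theorem sum_norm_integral_exp_lam_sub_le {t : ℝ} (ht : 0 ≤ t) {F : Finset {k : ℕ // Odd k}}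
    {j : {k : ℕ // Odd k}} (hj : j ∈ F) :
    ∑ k ∈ F, ‖∫ s in (0 : ℝ)..t, Complex.exp (Complex.I * ↑(lam j.1 - lam k.1) * s)‖ ≤ t + 8 := by
  rw [← Finset.add_sum_erase F _ hj]
  gcongr
  · simp [abs_of_nonneg ht]
  · calc ∑ k ∈ F.erase j, ‖∫ s in (0 : ℝ)..t, Complex.exp (Complex.I * ↑(lam j.1 - lam k.1) * s)‖
        ≤ ∑ k ∈ F.erase j, 8 * (1 / ((j.1 : ℝ) - k.1) ^ 2) := by
          refine Finset.sum_le_sum fun k hk => ?_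
          rw [mul_one_div]
          exact norm_integral_exp_lam_sub_le
            (fun h => Finset.ne_of_mem_erase hk (Subtype.ext h).symm) 0 t
      _ ≤ 8 := by
          rw [← Finset.mul_sum]
          linarith [sum_erase_one_div_sub_sq_le_one F j]

theorem memLp_conj_exp_I_mul (μ : Measure ℝ) [IsFiniteMeasure μ] (a : ℝ) :
    MemLp (fun s : ℝ => conj (Complex.exp (Complex.I * a * s))) 2 μ :=
  MemLp.of_bound (by fun_prop) 1 (Eventually.of_forall fun s => by
    rw [RCLike.norm_conj, mul_assoc, ← Complex.ofReal_mul, Complex.norm_exp_I_mul_ofReal])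

theorem exp_mul_conj_exp (a b s : ℝ) :
    Complex.exp (Complex.I * a * s) * conj (Complex.exp (Complex.I * b * s))
      = Complex.exp (Complex.I * ↑(a - b) * s) := by
  rw [← Complex.exp_conj, ← Complex.exp_add]
  congr 1
  simp only [map_mul, Complex.conj_I, Complex.conj_ofReal]
  push_cast
  ring

theorem sum_norm_integral_mul_exp_lam_sq_le {t : ℝ} (ht : 0 ≤ t) {q : ℝ → ℂ}
    (hq : MemLp q 2 (volume.restrict (Ioc 0 t))) (F : Finset {k : ℕ // Odd k}) :
    ∑ k ∈ F, ‖∫ s in (0 : ℝ)..t, q s * Complex.exp (Complex.I * (lam k.1 : ℂ) * (s : ℂ))‖ ^ 2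
      ≤ (t + 8) * ∫ s in (0 : ℝ)..t, ‖q s‖ ^ 2 := by
  have hv (k : ℕ) := memLp_conj_exp_I_mul (volume.restrict (Ioc 0 t)) (lam k)
  have hgram : ∀ j k : {k : ℕ // Odd k}, ⟪(hv j.1).toLp _, (hv k.1).toLp _⟫_ℂ
      = ∫ s in (0 : ℝ)..t, Complex.exp (Complex.I * ↑(lam j.1 - lam k.1) * s) := by
    intro j k
    rw [MemLp.inner_toLp_toLp, intervalIntegral.integral_of_le ht]
    simp only [Complex.conj_conj, exp_mul_conj_exp]
  have hcoef : ∀ k : {k : ℕ // Odd k}, ⟪(hv k.1).toLp _, hq.toLp q⟫_ℂ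
      = ∫ s in (0 : ℝ)..t, q s * Complex.exp (Complex.I * (lam k.1 : ℂ) * (s : ℂ)) := by
    intro k
    rw [MemLp.inner_toLp_toLp, intervalIntegral.integral_of_le ht]
    simp only [Complex.conj_conj, mul_comm]
  have hbessel := sum_norm_inner_sq_le_of_row_sum_le (𝕜 := ℂ) F (fun k => (hv k.1).toLp _)
    (show (0 : ℝ) ≤ t + 8 by positivity)
    (fun j hj => by simpa only [hgram] using sum_norm_integral_exp_lam_sub_le ht hj) (hq.toLp q)
  simpa only [hcoef, hq.norm_toLp_sq, intervalIntegral.integral_of_le ht] using hbessel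

theorem stmt6_general (T : ℝ) (q : ℝ → ℂ)
    (hq : MemLp q 2 (volume.restrict (Ioc 0 T)))
    (t : ℝ) (ht : t ∈ Icc (0:ℝ) T) :
    Summable (fun k : {k : ℕ // Odd k} =>
      ‖∫ s in (0:ℝ)..t, q s * Complex.exp (Complex.I * (lam k.1 : ℂ) * (s:ℂ))‖ ^ 2) ∧
    (∑' k : {k : ℕ // Odd k},
        ‖∫ s in (0:ℝ)..t, q s * Complex.exp (Complex.I * (lam k.1 : ℂ) * (s:ℂ))‖ ^ 2)
      ≤ (T + 8 * π) * ∫ s in (0:ℝ)..t, ‖q s‖ ^ 2 := by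
  obtain ⟨ht0, htT⟩ := ht
  have hqt : MemLp q 2 (volume.restrict (Ioc 0 t)) :=
    hq.mono_measure (Measure.restrict_mono (Ioc_subset_Ioc_right htT) le_rfl)
  have hbound : ∀ F : Finset {k : ℕ // Odd k},
      ∑ k ∈ F, ‖∫ s in (0:ℝ)..t, q s * Complex.exp (Complex.I * (lam k.1 : ℂ) * (s:ℂ))‖ ^ 2
        ≤ (T + 8 * π) * ∫ s in (0:ℝ)..t, ‖q s‖ ^ 2 := by
    intro F
    refine (sum_norm_integral_mul_exp_lam_sq_le ht0 hqt F).trans ?_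
    have hq2 : 0 ≤ ∫ s in (0:ℝ)..t, ‖q s‖ ^ 2 :=
      intervalIntegral.integral_nonneg ht0 fun _ _ => by positivity
    gcongr
    linarith [Real.pi_gt_three]
  have hnonneg : 0 ≤ fun k : {k : ℕ // Odd k} =>
      ‖∫ s in (0:ℝ)..t, q s * Complex.exp (Complex.I * (lam k.1 : ℂ) * (s:ℂ))‖ ^ 2 :=
    fun _ => by positivity
  exact ⟨summable_of_sum_le hnonneg hbound, Real.tsum_le_of_sum_le hnonneg hbound⟩

/-- For every `T > 0`, every `q ∈ L²((0,T),ℂ)`, and every `t ∈ [0,T]`,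
`∑_{k ∈ D} |∫₀ᵗ q(s) e^{iλ_k s} ds|² ≤ (T + 8π) ∫₀ᵗ |q(s)|² ds`. -/
theorem stmt6 (T : ℝ) (hT : 0 < T) (q : ℝ → ℂ)
    (hq : MemLp q 2 (volume.restrict (Ioc 0 T)))
    (t : ℝ) (ht : t ∈ Icc (0:ℝ) T) :
    Summable (fun k : {k : ℕ // Odd k} =>
      ‖∫ s in (0:ℝ)..t, q s * Complex.exp (Complex.I * (lam k.1 : ℂ) * (s:ℂ))‖ ^ 2) ∧
    (∑' k : {k : ℕ // Odd k},
        ‖∫ s in (0:ℝ)..t, q s * Complex.exp (Complex.I * (lam k.1 : ℂ) * (s:ℂ))‖ ^ 2)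
      ≤ (T + 8 * π) * ∫ s in (0:ℝ)..t, ‖q s‖ ^ 2 :=
  stmt6_general T q hq t ht
end
end

section
/- For every T > 0 there exists a constant C = C(T) > 0 such that for every H¹(0,T) function q with derivative g one has sup_{t∈[0,T]} Σ_{k∈D} (1 + λ_k) | ∫₀^t q(s) e^{−iλ_k(t−s)} ds |² ≤ C ( |q(0)|² + ‖q‖²_{L²(0,T)} + ‖g‖²_{L²(0,T)} ). (This quantity controls the H¹₀(−π,π)-norm of the wavefunction F(q,t) = (i/√π) Σ_{k∈D} (∫₀^t q(s) e^{−iλ_k(t−s)} ds) ψ_k, where ψ_k(x) = (1/√π) cos(kx/2).) -/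
/-! Writing `q s = q 0 + ∫₀ˢ g` and exchanging the order of integration on the triangle
`0 < u ≤ s ≤ t`, the mode integral `∫₀ᵗ q(s) e^{-iλ(t-s)} ds` becomes `q 0` times
`∫₀ᵗ e^{-iλ(t-s)} ds` plus `∫₀ᵗ g(u) (∫ᵤᵗ e^{-iλ(t-s)} ds) du`. Every integral of
`e^{-iλ(t-s)}` over an interval is at most `2/λ` in modulus, so the mode integral is at most
`(2/λ)(|q 0| + ‖g‖_{L¹})`. The weights `(1 + λ_k)(2/λ_k)² = 64/k⁴ + 16/k²` are summable, and
`‖g‖²_{L¹(0,T)} ≤ T ‖g‖²_{L²(0,T)}` by Hölder. -/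

open MeasureTheory Set Filter
open scoped Real Topology ENNReal

noncomputable section

lemma norm_exp_neg_I_mul_sub (l t s : ℝ) :
    ‖Complex.exp (-Complex.I * l * (t - s))‖ = 1 := by
  rw [Complex.norm_exp]; simp

lemma norm_integral_exp_neg_I_mul_sub_le {l : ℝ} (hl : l ≠ 0) (a b t : ℝ) :
    ‖∫ s in a..b, Complex.exp (-Complex.I * l * (t - s))‖ ≤ 2 / |l| := by
  have hl' : (l : ℂ) ≠ 0 := by exact_mod_cast hl
  have hderiv (s : ℝ) : HasDerivAt
      (fun s : ℝ => Complex.exp (-Complex.I * l * (t - s)) / (Complex.I * l))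
      (Complex.exp (-Complex.I * l * (t - s))) s :=
    ((((hasDerivAt_id (s : ℂ)).const_sub (t : ℂ)).const_mul (-Complex.I * l)).cexp.comp_ofReal
      |>.div_const _).congr_deriv (by simp only [id]; field_simp)
  rw [intervalIntegral.integral_eq_sub_of_hasDerivAt (fun s _ => hderiv s)
    ((by fun_prop : Continuous _).intervalIntegrable _ _), ← sub_div, norm_div,
    show ‖Complex.I * (l : ℂ)‖ = |l| by simp]
  gcongr
  exact (norm_sub_le _ _).trans_eq
    (by rw [norm_exp_neg_I_mul_sub, norm_exp_neg_I_mul_sub]; norm_num)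

-- At `k = 0` both sides are `0`, through `2 / 0 = 0` and `1 / 0 = 0`.
lemma one_add_lam_mul_two_div_lam_sq (k : ℕ) :
    (1 + lam k) * (2 / lam k) ^ 2 = 64 * (1 / (k : ℝ) ^ 4) + 16 * (1 / (k : ℝ) ^ 2) := by
  rcases eq_or_ne k 0 with rfl | hk
  · simp [lam]
  · unfold lam
    field_simp
    ring

lemma summable_one_add_lam_mul_two_div_lam_sq :
    Summable fun k : ℕ => (1 + lam k) * (2 / lam k) ^ 2 := by
  simp_rw [one_add_lam_mul_two_div_lam_sq]
  exact ((Real.summable_one_div_nat_pow.mpr (by norm_num)).mul_left 64).add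
    ((Real.summable_one_div_nat_pow.mpr one_lt_two).mul_left 16)

lemma lam_pos {k : ℕ} (hk : k ≠ 0) : 0 < lam k := by
  unfold lam
  have : (k : ℝ) ≠ 0 := by exact_mod_cast hk
  positivity

lemma integral_primitive_mul_eq_integral_mul_integral {g φ : ℝ → ℂ} {a b : ℝ} (hab : a ≤ b)
    (hg : IntegrableOn g (Ioc a b)) (hφ : IntegrableOn φ (Ioc a b)) :
    ∫ s in a..b, (∫ u in a..s, g u) * φ s = ∫ u in a..b, g u * ∫ s in u..b, φ s := by
  set D : Set (ℝ × ℝ) := {p | a < p.2 ∧ p.2 ≤ p.1}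
  have hD : MeasurableSet D :=
    (measurableSet_lt measurable_const measurable_snd).inter
      (measurableSet_le measurable_snd measurable_fst)
  set F : ℝ × ℝ → ℂ := D.indicator fun p => φ p.1 * g p.2
  have hF : Integrable F ((volume.restrict (Ioc a b)).prod (volume.restrict (Ioc a b))) :=
    (hφ.mul_prod hg).indicator hD
  have hinner (s : ℝ) (hs : s ∈ Ioc a b) :
      (∫ u in a..s, g u) * φ s = ∫ u in Ioc a b, F (s, u) := by
    have hF_s : (fun u => F (s, u)) = (Ioc a s).indicator fun u => φ s * g u := by
      ext u
      simp only [F, D, indicator_apply, mem_ofPred_eq, mem_Ioc]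
    rw [hF_s, setIntegral_indicator measurableSet_Ioc,
      inter_eq_self_of_subset_right (Ioc_subset_Ioc_right hs.2), integral_const_mul,
      intervalIntegral.integral_of_le hs.1.le, mul_comm]
  have houter (u : ℝ) (hu : u ∈ Ioc a b) :
      g u * ∫ s in u..b, φ s = ∫ s in Ioc a b, F (s, u) := by
    have hF_u : (fun s => F (s, u)) = (Ici u).indicator fun s => φ s * g u := by
      ext s
      by_cases h : u ≤ s <;> simp [F, D, h, hu.1]
    have hIcc : Ioc a b ∩ Ici u = Icc u b := by
      ext s
      grind
    rw [hF_u, setIntegral_indicator measurableSet_Ici, hIcc, integral_Icc_eq_integral_Ioc,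
      ← intervalIntegral.integral_of_le hu.2, intervalIntegral.integral_mul_const, mul_comm]
  rw [intervalIntegral.integral_of_le hab, intervalIntegral.integral_of_le hab,
    setIntegral_congr_fun measurableSet_Ioc hinner, setIntegral_congr_fun measurableSet_Ioc houter]
  exact integral_integral_swap hF

lemma norm_integral_mul_exp_neg_I_mul_sub_le {q g : ℝ → ℂ} {a b l : ℝ} (hab : a ≤ b)
    (hl : l ≠ 0) (hg : IntegrableOn g (Ioc a b))
    (hq : ∀ s ∈ Icc a b, q s = q a + ∫ u in a..s, g u) (t : ℝ) :
    ‖∫ s in a..b, q s * Complex.exp (-Complex.I * l * (t - s))‖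
      ≤ 2 / |l| * (‖q a‖ + ∫ u in Ioc a b, ‖g u‖) := by
  set φ : ℝ → ℂ := fun s => Complex.exp (-Complex.I * l * (t - s))
  have hφ : Continuous φ := by fun_prop
  have hg' : IntervalIntegrable g volume a b :=
    (intervalIntegrable_iff_integrableOn_Ioc_of_le hab).mpr hg
  have hprim : ContinuousOn (fun s => ∫ u in a..s, g u) (uIcc a b) :=
    intervalIntegral.continuousOn_primitive_interval' hg' left_mem_uIcc
  have hsplit : ∫ s in a..b, q s * φ s
      = (q a * ∫ s in a..b, φ s) + ∫ u in a..b, g u * ∫ s in u..b, φ s := by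
    have hq' : EqOn (fun s => q s * φ s)
        (fun s => q a * φ s + (∫ u in a..s, g u) * φ s) (uIcc a b) := by
      intro s hs
      rw [uIcc_of_le hab] at hs
      simp only [hq s hs, add_mul]
    have hint : IntervalIntegrable (fun s => (∫ u in a..s, g u) * φ s) volume a b :=
      (hprim.mul hφ.continuousOn).intervalIntegrable
    rw [intervalIntegral.integral_congr hq',
      intervalIntegral.integral_add ((hφ.intervalIntegrable _ _).const_mul _) hint,
      intervalIntegral.integral_const_mul,
      integral_primitive_mul_eq_integral_mul_integral hab hg hφ.integrableOn_Ioc]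
  have htail : ‖∫ u in a..b, g u * ∫ s in u..b, φ s‖ ≤ 2 / |l| * ∫ u in Ioc a b, ‖g u‖ := by
    rw [← integral_const_mul, ← intervalIntegral.integral_of_le hab]
    refine intervalIntegral.norm_integral_le_of_norm_le hab (.of_forall fun u _ => ?_)
      (hg'.norm.const_mul _)
    rw [norm_mul, mul_comm]
    gcongr
    exact norm_integral_exp_neg_I_mul_sub_le hl u b t
  calc ‖∫ s in a..b, q s * φ s‖
      ≤ ‖q a * ∫ s in a..b, φ s‖ + ‖∫ u in a..b, g u * ∫ s in u..b, φ s‖ :=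
        hsplit ▸ norm_add_le _ _
    _ ≤ ‖q a‖ * (2 / |l|) + 2 / |l| * ∫ u in Ioc a b, ‖g u‖ := by
        rw [norm_mul]
        gcongr
        exact norm_integral_exp_neg_I_mul_sub_le hl a b t
    _ = 2 / |l| * (‖q a‖ + ∫ u in Ioc a b, ‖g u‖) := by ring

lemma sq_integral_norm_le_measureReal_mul_sq {α E : Type*} [MeasurableSpace α]
    [NormedAddCommGroup E] {μ : Measure α} [IsFiniteMeasure μ] {g : α → E} (hg : MemLp g 2 μ) :
    (∫ x, ‖g x‖ ∂μ) ^ 2 ≤ μ.real univ * (eLpNorm g 2 μ).toReal ^ 2 := by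
  have hholder := eLpNorm_le_eLpNorm_mul_rpow_measure_univ one_le_two hg.aestronglyMeasurable
  have hexp : 1 / (1 : ℝ≥0∞).toReal - 1 / (2 : ℝ≥0∞).toReal = 1 / 2 := by norm_num
  rw [hexp] at hholder
  have hL1 : ∫ x, ‖g x‖ ∂μ = (eLpNorm g 1 μ).toReal := by
    rw [eLpNorm_one_eq_lintegral_enorm, integral_norm_eq_lintegral_enorm hg.aestronglyMeasurable]
  have hle := ENNReal.toReal_mono (ENNReal.mul_ne_top hg.eLpNorm_ne_top
    (ENNReal.rpow_ne_top_of_nonneg (by norm_num) (measure_ne_top μ univ))) hholder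
  rw [ENNReal.toReal_mul, ← ENNReal.toReal_rpow, ← Real.sqrt_eq_rpow, ← measureReal_def] at hle
  rw [hL1]
  calc (eLpNorm g 1 μ).toReal ^ 2 ≤ ((eLpNorm g 2 μ).toReal * √(μ.real univ)) ^ 2 := by
        gcongr
    _ = μ.real univ * (eLpNorm g 2 μ).toReal ^ 2 := by
        rw [mul_pow, Real.sq_sqrt measureReal_nonneg, mul_comm]

lemma summable_and_tsum_one_add_lam_mul_sq_le {T t : ℝ} {q g : ℝ → ℂ}
    (hg : IntegrableOn g (Ioc 0 T)) (hq : ∀ s ∈ Icc (0:ℝ) T, q s = q 0 + ∫ u in (0:ℝ)..s, g u)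
    (ht : t ∈ Icc (0:ℝ) T) :
    Summable (fun k : {k : ℕ // Odd k} => (1 + lam k.1) *
        ‖∫ s in (0:ℝ)..t, q s * Complex.exp (-Complex.I * (lam k.1 : ℂ) * ((t:ℂ) - (s:ℂ)))‖ ^ 2) ∧
      ∑' k : {k : ℕ // Odd k}, (1 + lam k.1) *
          ‖∫ s in (0:ℝ)..t, q s * Complex.exp (-Complex.I * (lam k.1 : ℂ) * ((t:ℂ) - (s:ℂ)))‖ ^ 2
        ≤ (∑' k : {k : ℕ // Odd k}, (1 + lam k.1) * (2 / lam k.1) ^ 2) *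
          (‖q 0‖ + ∫ u in Ioc (0:ℝ) T, ‖g u‖) ^ 2 := by
  set M := ‖q 0‖ + ∫ u in Ioc (0:ℝ) T, ‖g u‖
  have hgt : ∫ u in Ioc (0:ℝ) t, ‖g u‖ ≤ ∫ u in Ioc (0:ℝ) T, ‖g u‖ :=
    setIntegral_mono_set hg.norm (.of_forall fun u => norm_nonneg _)
      (Ioc_subset_Ioc_right ht.2).eventuallyLE
  have hterm (k : {k : ℕ // Odd k}) : (1 + lam k.1) *
      ‖∫ s in (0:ℝ)..t, q s * Complex.exp (-Complex.I * (lam k.1 : ℂ) * ((t:ℂ) - (s:ℂ)))‖ ^ 2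
        ≤ (1 + lam k.1) * (2 / lam k.1) ^ 2 * M ^ 2 := by
    have hlam := lam_pos k.2.pos.ne'
    have hmode := norm_integral_mul_exp_neg_I_mul_sub_le ht.1 hlam.ne'
      (hg.mono_set (Ioc_subset_Ioc_right ht.2))
      (fun s hs => hq s ⟨hs.1, hs.2.trans ht.2⟩) t
    rw [abs_of_pos hlam] at hmode
    rw [mul_assoc, ← mul_pow]
    gcongr
    exact hmode.trans (mul_le_mul_of_nonneg_left (add_le_add_right hgt _) (by positivity))
  have hmajor : Summable fun k : {k : ℕ // Odd k} => (1 + lam k.1) * (2 / lam k.1) ^ 2 * M ^ 2 :=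
    (summable_one_add_lam_mul_two_div_lam_sq.subtype _).mul_right _
  have hsum := hmajor.of_nonneg_of_le (fun k => by have := (lam_pos k.2.pos.ne').le; positivity)
    hterm
  exact ⟨hsum, (hsum.tsum_le_tsum hterm hmajor).trans_eq tsum_mul_right⟩

/-- For every `T > 0` there exists `C = C(T) > 0` such that for every
`H¹(0,T)` function `q` with derivative `g`,
`sup_{t∈[0,T]} ∑_{k∈D} (1 + λ_k) |∫₀ᵗ q(s) e^{−iλ_k(t−s)} ds|²
  ≤ C (|q(0)|² + ‖q‖²_{L²(0,T)} + ‖g‖²_{L²(0,T)})`. -/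
theorem stmt7 (T : ℝ) (hT : 0 < T) :
    ∃ C > (0:ℝ), ∀ q g : ℝ → ℂ, IsH1 T q g →
      ∀ t ∈ Icc (0:ℝ) T,
        Summable (fun k : {k : ℕ // Odd k} => (1 + lam k.1) *
          ‖∫ s in (0:ℝ)..t, q s * Complex.exp (-Complex.I * (lam k.1 : ℂ) * ((t:ℂ) - (s:ℂ)))‖ ^ 2) ∧
        (∑' k : {k : ℕ // Odd k}, (1 + lam k.1) *
            ‖∫ s in (0:ℝ)..t, q s * Complex.exp (-Complex.I * (lam k.1 : ℂ) * ((t:ℂ) - (s:ℂ)))‖ ^ 2)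
          ≤ C * (‖q 0‖ ^ 2 + (L2norm T q) ^ 2 + (L2norm T g) ^ 2) := by
  set S := ∑' k : {k : ℕ // Odd k}, (1 + lam k.1) * (2 / lam k.1) ^ 2
  have hS : 0 ≤ S := tsum_nonneg fun k => by have := (lam_pos k.2.pos.ne').le; positivity
  refine ⟨2 * S * (1 + T) + 1, by positivity, fun q g ⟨hg, hq⟩ t ht => ?_⟩
  obtain ⟨hsum, hle⟩ := summable_and_tsum_one_add_lam_mul_sq_le (hg.integrable one_le_two) hq ht
  refine ⟨hsum, hle.trans ?_⟩
  have hG : (∫ u in Ioc (0:ℝ) T, ‖g u‖) ^ 2 ≤ T * L2norm T g ^ 2 := by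
    simpa [L2norm, measureReal_restrict_apply_univ, Real.volume_real_Ioc_of_le hT.le] using
      sq_integral_norm_le_measureReal_mul_sq hg
  have hM : (‖q 0‖ + ∫ u in Ioc (0:ℝ) T, ‖g u‖) ^ 2
      ≤ 2 * ‖q 0‖ ^ 2 + 2 * T * L2norm T g ^ 2 := by
    nlinarith [sq_nonneg (‖q 0‖ - ∫ u in Ioc (0:ℝ) T, ‖g u‖)]
  nlinarith [mul_le_mul_of_nonneg_left hM hS, sq_nonneg (L2norm T q), sq_nonneg (L2norm T g),
    sq_nonneg ‖q 0‖, mul_nonneg hS hT.le]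
end
end

section
/- For every a ∈ ℝ and every λ ∈ ℂ with Im λ ≠ 0, one has 1 + a · G₀^λ(0,0) ≠ 0, where G₀^λ(0,0) = (1/π) Σ_{k∈D} 1/(λ_k + λ) (the series converges absolutely since λ_k + λ ≠ 0 for all k). -/
/-!
Each term `1 / (λ_k + λ)` has imaginary part `-Im λ / |λ_k + λ|²`, of the sign opposite to
`Im λ`, so the whole series has nonzero imaginary part; and `1 + a w` never vanishes for real `a`
when `Im w ≠ 0`.
-/

open MeasureTheory Set Filter
open scoped Real Topology ENNReal

noncomputable section

namespace Complex

theorem neg_im_mul_im_tsum_inv_ofReal_add_pos {ι : Type*} [Nonempty ι] {x : ι → ℝ}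
    {z : ℂ} (hz : z.im ≠ 0) (hs : Summable fun i => ((x i : ℂ) + z)⁻¹) :
    0 < -z.im * (∑' i, ((x i : ℂ) + z)⁻¹).im := by
  have him : ∀ i, -z.im * (((x i : ℂ) + z)⁻¹).im = z.im ^ 2 / normSq ((x i : ℂ) + z) := by
    intro i
    simp only [inv_im, add_im, ofReal_im, zero_add]
    ring
  have hpos : ∀ i, 0 < z.im ^ 2 / normSq ((x i : ℂ) + z) := fun i =>
    div_pos (by positivity) (normSq_pos.2 fun h => hz (by simpa using congrArg im h))
  have him_sum : Summable fun i => -z.im * (((x i : ℂ) + z)⁻¹).im :=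
    (hs.mapL imCLM).mul_left _
  rw [im_tsum hs, ← tsum_mul_left]
  obtain ⟨i⟩ := ‹Nonempty ι›
  exact him_sum.tsum_pos (fun j => (him j ▸ hpos j).le) i (him i ▸ hpos i)

theorem one_add_ofReal_mul_ne_zero (a : ℝ) {w : ℂ} (hw : w.im ≠ 0) : 1 + a * w ≠ 0 := by
  intro h
  have h_im := congrArg im h
  simp only [add_im, one_im, mul_im, ofReal_re, ofReal_im, zero_mul, add_zero, zero_add]
    at h_im
  rcases mul_eq_zero.1 h_im with rfl | h_im
  · simp at h
  · exact hw h_im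

end Complex

/-- For every `a ∈ ℝ` and every `λ ∈ ℂ` with `Im λ ≠ 0`, one has
`1 + a·G₀^λ(0,0) ≠ 0`, where `G₀^λ(0,0) = (1/π) ∑_{k∈D} 1/(λ_k + λ)`. -/
theorem stmt8 (a : ℝ) (lamC : ℂ) (hlam : lamC.im ≠ 0) :
    (1 : ℂ) + (a : ℂ) *
      ((1 / (π : ℂ)) * ∑' k : {k : ℕ // Odd k}, 1 / ((lam k.1 : ℂ) + lamC)) ≠ 0 := by
  simp only [one_div]
  by_cases hs : Summable fun k : {k : ℕ // Odd k} => ((lam k.1 : ℂ) + lamC)⁻¹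
  · have : Nonempty {k : ℕ // Odd k} := ⟨⟨1, odd_one⟩⟩
    have hS := (Complex.neg_im_mul_im_tsum_inv_ofReal_add_pos hlam hs).ne'
    refine Complex.one_add_ofReal_mul_ne_zero a ?_
    rw [← Complex.ofReal_inv, Complex.im_ofReal_mul]
    exact mul_ne_zero (inv_ne_zero Real.pi_ne_zero) (right_ne_zero_of_mul hS)
  · simp [tsum_eq_zero_of_not_summable hs]
end
end

section
/- Let T ≥ 8π and let (c_k)_{k∈D} be complex numbers with Σ_{k∈D} k⁴ |c_k|² < ∞. Then there exists a continuous function ρ : [0,T] → ℂ with ρ(0) = ρ(T) = 0 which is an H¹(0,T) function (i.e. ρ(t) = ∫₀^t g(s) ds for some g ∈ L²((0,T),ℂ)) and satisfies c_k = (i/√π) ∫₀^T ρ(s) e^{−iλ_k(T−s)} ds for all k ∈ D. -/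
open MeasureTheory Set Filter
open scoped Real Topology ENNReal

noncomputable section

/-!
Let `en n s = exp (i n s / 4)`; these are `8π`-periodic and orthogonal on `(0, 8π]`, and
`exp (-i λ_k (T - s)) = exp (-i λ_k T) · en (k²) s`. Take
`ρ(t) = ∑_{j ∈ D} d_j (en (-j²) t - en (-4) t)` on `[0, 8π]` and `ρ = 0` on `[8π, T]`; it vanishes
at `0` and at `8π`. Against `en (k²)` the term `en (-j²)` integrates over `(0, 8π]` to `8π δ_jk` and
`en (-4)` to `0`, because `k² ≠ 4` for odd `k`. Hence the moments of `ρ` are `8π d_k`, and `d_k` is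
a rescaling of `c_k`.

The derivative `∑ d_j (-(i j² / 4) en (-j²) + i en (-4))` converges in `L²`: its first part is
orthogonal with `∑ j⁴ |d_j|² < ∞`, its second converges absolutely by Cauchy–Schwarz against
`∑ j⁻⁴`. So `ρ` is defined as the primitive of this `L²` sum, and its pointwise formula is recovered
by pairing with the indicator of `(0, t]`, a continuous functional on `L²`.
-/

theorem Orthonormal.summable_smul {𝕜 E ι : Type*} [RCLike 𝕜] [NormedAddCommGroup E]
    [InnerProductSpace 𝕜 E] [CompleteSpace E] {v : ι → E} (hv : Orthonormal 𝕜 v) {a : ι → 𝕜}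
    (ha : Summable fun i => ‖a i‖ ^ 2) : Summable fun i => a i • v i :=
  (hv.orthogonalFamily.summable_iff_norm_sq_summable a).2 ha

lemma summable_of_summable_pow_four_mul_sq {p : ℕ → Prop} (hp : ∀ k, p k → k ≠ 0) {a : ℕ → ℝ}
    (ha : ∀ k, 0 ≤ a k) (h : Summable fun k : {k // p k} => (k : ℝ) ^ 4 * a k ^ 2) :
    Summable fun k : {k // p k} => a k := by
  have hinv : Summable fun k : {k // p k} => (((k : ℝ) ^ 2)⁻¹) ^ (2 : ℝ) := by
    simpa [Real.rpow_two, ← pow_mul, Function.comp_def] using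
      (Real.summable_nat_pow_inv.2 (by norm_num : 1 < 4)).subtype (p ·)
  have hcs := Real.summable_mul_of_Lp_Lq_of_nonneg Real.HolderConjugate.two_two
    (f := fun k : {k // p k} => (k : ℝ) ^ 2 * a k) (fun k => by have := ha k; positivity)
    (fun k => by positivity) (by simpa [Real.rpow_two, mul_pow, ← pow_mul] using h) hinv
  refine hcs.congr fun k => ?_
  have hk : (k : ℝ) ≠ 0 := by exact_mod_cast hp k k.2
  field_simp

namespace MomentProblem

def period : ℝ := 8 * π

lemma period_pos : 0 < period := by unfold period; positivity

def freq (n : ℤ) : ℂ := Complex.I * n / 4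

lemma norm_freq (n : ℤ) : ‖freq n‖ = |(n : ℝ)| / 4 := by
  simp [freq, Complex.norm_intCast]

def en (n : ℤ) (s : ℝ) : ℂ := Complex.exp (freq n * s)

lemma en_add (m n : ℤ) (s : ℝ) : en (m + n) s = en m s * en n s := by
  rw [en, en, en, ← Complex.exp_add]; congr 1; simp only [freq]; push_cast; ring

lemma en_zero (s : ℝ) : en 0 s = 1 := by simp [en, freq]

lemma norm_en (n : ℤ) (s : ℝ) : ‖en n s‖ = 1 := by
  rw [en, freq, Complex.norm_exp]; simp

lemma conj_en (n : ℤ) (s : ℝ) : starRingEnd ℂ (en n s) = en (-n) s := by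
  rw [en, en, ← Complex.exp_conj, freq, freq]; simp [Complex.conj_I, map_ofNat]

@[fun_prop]
lemma continuous_en (n : ℤ) : Continuous (en n) := by unfold en; fun_prop

lemma en_period (n : ℤ) : en n period = 1 := by
  rw [en, freq, period, ← Complex.exp_int_mul_two_pi_mul_I n]; push_cast; ring_nf

lemma freq_mul_integral_en (n : ℤ) (t : ℝ) :
    freq n * ∫ s in (0:ℝ)..t, en n s = en n t - 1 := by
  rcases eq_or_ne n 0 with rfl | hn
  · simp [freq, en_zero]
  · have hfreq : freq n ≠ 0 := by simp [freq, hn]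
    simp only [en]
    rw [integral_exp_mul_complex hfreq, mul_div_cancel₀ _ hfreq]
    simp

lemma integral_en_period (n : ℤ) :
    ∫ s in (0:ℝ)..period, en n s = if n = 0 then (period : ℂ) else 0 := by
  split_ifs with hn
  · simp [hn, en_zero]
  · have hfreq : freq n ≠ 0 := by simp [freq, hn]
    have := freq_mul_integral_en n period
    rw [en_period, sub_self] at this
    exact (mul_eq_zero.1 this).resolve_left hfreq

lemma memLp_indicator_en (T : ℝ) (n : ℤ) :
    MemLp ((Ioc 0 period).indicator (en n)) 2 (volume.restrict (Ioc 0 T)) :=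
  MemLp.of_bound ((continuous_en n).aestronglyMeasurable.indicator measurableSet_Ioc) 1
    (Eventually.of_forall fun s => (norm_indicator_le_norm_self _ s).trans (norm_en n s).le)

def charLp (T : ℝ) (n : ℤ) : Lp ℂ 2 (volume.restrict (Ioc 0 T)) :=
  (memLp_indicator_en T n).toLp _

lemma inner_charLp {T : ℝ} (hT : period ≤ T) (m n : ℤ) :
    inner ℂ (charLp T m) (charLp T n) = if m = n then (period : ℂ) else 0 := by
  have hpointwise : ∀ᵐ s ∂volume.restrict (Ioc 0 T),
      inner ℂ (charLp T m s) (charLp T n s) = (Ioc 0 period).indicator (en (n - m)) s := by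
    filter_upwards [(memLp_indicator_en T m).coeFn_toLp, (memLp_indicator_en T n).coeFn_toLp]
      with s hm hn
    rw [charLp, charLp, hm, hn]
    by_cases hs : s ∈ Ioc 0 period
    · simp [indicator_of_mem hs, conj_en, sub_eq_add_neg, en_add]
    · simp [indicator_of_notMem hs]
  rw [L2.inner_def, integral_congr_ae hpointwise, integral_indicator measurableSet_Ioc,
    Measure.restrict_restrict measurableSet_Ioc, inter_eq_left.2 (Ioc_subset_Ioc le_rfl hT),
    ← intervalIntegral.integral_of_le period_pos.le, integral_en_period]
  simp only [sub_eq_zero, eq_comm]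

lemma orthonormal_charLp {T : ℝ} (hT : period ≤ T) {ι : Type*} {ω : ι → ℤ}
    (hω : Function.Injective ω) :
    Orthonormal ℂ fun i => (√period : ℂ)⁻¹ • charLp T (ω i) := by
  classical
  rw [orthonormal_iff_ite]
  intro i j
  have hP : (√period : ℂ) ^ 2 = period := by
    rw [← Complex.ofReal_pow, Real.sq_sqrt period_pos.le]
  have hP0 : (√period : ℂ) ≠ 0 := by
    exact_mod_cast (Real.sqrt_pos.2 period_pos).ne'
  simp only [inner_smul_left, inner_smul_right, inner_charLp hT, map_inv₀, Complex.conj_ofReal]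
  by_cases h : i = j
  · rw [if_pos (congrArg ω h), if_pos h, ← hP]; field_simp
  · rw [if_neg (hω.ne h), if_neg h, mul_zero, mul_zero]

def intervalIntegralCLM (T t : ℝ) : Lp ℂ 2 (volume.restrict (Ioc 0 T)) →L[ℂ] ℂ :=
  innerSL ℂ (indicatorConstLp 2 measurableSet_Ioc (measure_ne_top _ (Ioc 0 t)) (1 : ℂ))

lemma intervalIntegralCLM_apply {T t : ℝ} (ht : t ∈ Icc 0 T)
    (f : Lp ℂ 2 (volume.restrict (Ioc 0 T))) :
    intervalIntegralCLM T t f = ∫ s in (0:ℝ)..t, f s := by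
  rw [intervalIntegralCLM, innerSL_apply_apply, L2.inner_indicatorConstLp_one,
    Measure.restrict_restrict measurableSet_Ioc, inter_eq_left.2 (Ioc_subset_Ioc le_rfl ht.2),
    intervalIntegral.integral_of_le ht.1]

lemma intervalIntegral_charLp {T t : ℝ} (ht : t ∈ Icc 0 T) (n : ℤ) :
    ∫ s in (0:ℝ)..t, charLp T n s = ∫ s in (0:ℝ)..min t period, en n s := by
  have hcoe : ∀ᵐ s, s ∈ uIoc 0 t → charLp T n s = (Ioc 0 period).indicator (en n) s := by
    have := (ae_restrict_iff' measurableSet_Ioc).1 (memLp_indicator_en T n).coeFn_toLp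
    filter_upwards [this] with s hs hst
    rw [uIoc_of_le ht.1] at hst
    exact hs (Ioc_subset_Ioc le_rfl ht.2 hst)
  rw [intervalIntegral.integral_congr_ae hcoe, intervalIntegral.integral_of_le ht.1,
    intervalIntegral.integral_of_le (le_min ht.1 period_pos.le),
    integral_indicator measurableSet_Ioc, Measure.restrict_restrict measurableSet_Ioc,
    Ioc_inter_Ioc, max_self, min_comm]

section Construction

variable {ι : Type*} (T : ℝ) (ω : ι → ℤ) (ω₀ : ℤ) (d : ι → ℂ)

def derivTerm (i : ι) : Lp ℂ 2 (volume.restrict (Ioc 0 T)) :=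
  d i • (freq (ω i) • charLp T (ω i) - freq ω₀ • charLp T ω₀)

def derivLp : Lp ℂ 2 (volume.restrict (Ioc 0 T)) := ∑' i, derivTerm T ω ω₀ d i

def rho (t : ℝ) : ℂ := ∫ s in (0:ℝ)..t, derivLp T ω ω₀ d s

def profile (t : ℝ) : ℂ := ∑' i, d i * (en (ω i) t - en ω₀ t)

variable {T ω d}

lemma summable_derivTerm (hT : period ≤ T) (hω : Function.Injective ω)
    (hd₂ : Summable fun i => (ω i : ℝ) ^ 2 * ‖d i‖ ^ 2) (hd₁ : Summable fun i => ‖d i‖) :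
    Summable (derivTerm T ω ω₀ d) := by
  have hP0 : (√period : ℂ) ≠ 0 := by exact_mod_cast (Real.sqrt_pos.2 period_pos).ne'
  have hsplit : derivTerm T ω ω₀ d = fun i =>
      (d i * freq (ω i) * √period) • ((√period : ℂ)⁻¹ • charLp T (ω i))
        - d i • (freq ω₀ • charLp T ω₀) := by
    ext1 i
    simp only [derivTerm, smul_sub, smul_smul, mul_assoc, mul_inv_cancel₀ hP0, mul_one]
  have hnorm : ∀ i, ‖d i * freq (ω i) * √period‖ ^ 2
      = period / 16 * ((ω i : ℝ) ^ 2 * ‖d i‖ ^ 2) := by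
    intro i
    rw [norm_mul, norm_mul, norm_freq, Complex.norm_real, Real.norm_of_nonneg (Real.sqrt_nonneg _)]
    rw [mul_pow, mul_pow, div_pow, sq_abs, Real.sq_sqrt period_pos.le]
    ring
  rw [hsplit]
  refine Summable.sub ((orthonormal_charLp hT hω).summable_smul ?_) ?_
  · simpa only [hnorm] using hd₂.mul_left (period / 16)
  · exact hd₁.of_norm.smul_const _

lemma rho_eq_profile (hT : period ≤ T) (hω : Function.Injective ω)
    (hd₂ : Summable fun i => (ω i : ℝ) ^ 2 * ‖d i‖ ^ 2) (hd₁ : Summable fun i => ‖d i‖)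
    {t : ℝ} (ht : t ∈ Icc 0 T) :
    rho T ω ω₀ d t = profile ω ω₀ d (min t period) := by
  rw [rho, ← intervalIntegralCLM_apply ht, derivLp,
    ContinuousLinearMap.map_tsum _ (summable_derivTerm ω₀ hT hω hd₂ hd₁)]
  refine tsum_congr fun i => ?_
  simp only [derivTerm, map_smul, map_sub, smul_eq_mul]
  simp only [intervalIntegralCLM_apply ht, intervalIntegral_charLp ht, freq_mul_integral_en]
  ring

lemma profile_period : profile ω ω₀ d period = 0 := by
  simp [profile, en_period]

lemma continuousOn_rho : ContinuousOn (rho T ω ω₀ d) (Icc 0 T) := by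
  have hint : IntegrableOn (derivLp T ω ω₀ d) (Icc 0 T) :=
    (integrableOn_Icc_iff_integrableOn_Ioc).2 <| (Lp.memLp _).integrable one_le_two
  exact (intervalIntegral.continuousOn_primitive hint).congr fun t ht =>
    intervalIntegral.integral_of_le ht.1

lemma norm_profileTerm_le (i : ι) (s : ℝ) : ‖d i * (en (ω i) s - en ω₀ s)‖ ≤ 2 * ‖d i‖ := by
  rw [norm_mul, mul_comm]
  gcongr
  calc ‖en (ω i) s - en ω₀ s‖ ≤ ‖en (ω i) s‖ + ‖en ω₀ s‖ := norm_sub_le _ _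
    _ = 2 := by rw [norm_en, norm_en]; norm_num

lemma summable_profileTerm (hd₁ : Summable fun i => ‖d i‖) (s : ℝ) :
    Summable fun i => d i * (en (ω i) s - en ω₀ s) :=
  (hd₁.mul_left 2).of_norm_bounded (norm_profileTerm_le ω₀ · s)

lemma integral_profile_mul_en [Countable ι] (hω : Function.Injective ω) (hω₀ : ∀ i, ω i ≠ ω₀)
    (hd₁ : Summable fun i => ‖d i‖) (k : ι) :
    ∫ s in (0:ℝ)..period, profile ω ω₀ d s * en (-ω k) s = period * d k := by
  classical
  have hterm : ∀ i, ∫ s in (0:ℝ)..period, d i * (en (ω i) s - en ω₀ s) * en (-ω k) s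
      = if i = k then period * d k else 0 := by
    intro i
    have hshift : ∀ s, d i * (en (ω i) s - en ω₀ s) * en (-ω k) s
        = d i * (en (ω i - ω k) s - en (ω₀ - ω k) s) := by
      intro s; rw [sub_eq_add_neg (ω i), sub_eq_add_neg ω₀, en_add, en_add]; ring
    simp only [hshift]
    rw [intervalIntegral.integral_const_mul, intervalIntegral.integral_sub
      ((continuous_en _).intervalIntegrable _ _) ((continuous_en _).intervalIntegrable _ _),
      integral_en_period, integral_en_period, if_neg (sub_ne_zero.2 (hω₀ k).symm)]
    by_cases hik : i = k
    · simp [hik, mul_comm]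
    · simp [hik, sub_ne_zero.2 (hω.ne hik)]
  have hsum : HasSum (fun i => ∫ s in (0:ℝ)..period, d i * (en (ω i) s - en ω₀ s) * en (-ω k) s)
      (∫ s in (0:ℝ)..period, profile ω ω₀ d s * en (-ω k) s) := by
    refine intervalIntegral.hasSum_integral_of_dominated_convergence (fun i _ => 2 * ‖d i‖)
      (fun i => Continuous.aestronglyMeasurable (by fun_prop)) (fun i => ?_)
      (ae_of_all _ fun _ _ => hd₁.mul_left 2) intervalIntegrable_const
      (ae_of_all _ fun s _ => (summable_profileTerm ω₀ hd₁ s).hasSum.mul_right _)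
    refine ae_of_all _ fun s _ => ?_
    rw [norm_mul, norm_en, mul_one]
    exact norm_profileTerm_le ω₀ i s
  simp only [hterm] at hsum
  exact hsum.unique (hasSum_ite_eq k _)

lemma integral_rho_mul (hT : period ≤ T) (hω : Function.Injective ω)
    (hd₂ : Summable fun i => (ω i : ℝ) ^ 2 * ‖d i‖ ^ 2) (hd₁ : Summable fun i => ‖d i‖)
    {f : ℝ → ℂ} (hf : Continuous f) :
    ∫ s in (0:ℝ)..T, rho T ω ω₀ d s * f s = ∫ s in (0:ℝ)..period, profile ω ω₀ d s * f s := by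
  have hperiod : period ∈ Icc 0 T := ⟨period_pos.le, hT⟩
  have hint : ∀ a ∈ Icc 0 T, ∀ b ∈ Icc 0 T,
      IntervalIntegrable (fun s => rho T ω ω₀ d s * f s) volume a b := fun a ha b hb =>
    ((continuousOn_rho ω₀).mul hf.continuousOn |>.mono (uIcc_subset_Icc ha hb)).intervalIntegrable
  have hhead : ∫ s in (0:ℝ)..period, rho T ω ω₀ d s * f s
      = ∫ s in (0:ℝ)..period, profile ω ω₀ d s * f s := by
    refine intervalIntegral.integral_congr fun s hs => ?_
    rw [uIcc_of_le period_pos.le] at hs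
    rw [rho_eq_profile ω₀ hT hω hd₂ hd₁ ⟨hs.1, hs.2.trans hT⟩, min_eq_left hs.2]
  have htail : ∫ s in period..T, rho T ω ω₀ d s * f s = 0 := by
    rw [← intervalIntegral.integral_zero]
    refine intervalIntegral.integral_congr fun s hs => ?_
    rw [uIcc_of_le hT] at hs
    rw [rho_eq_profile ω₀ hT hω hd₂ hd₁ ⟨period_pos.le.trans hs.1, hs.2⟩, min_eq_right hs.1,
      profile_period, zero_mul]
  rw [← intervalIntegral.integral_add_adjacent_intervals
    (hint 0 ⟨le_rfl, period_pos.le.trans hT⟩ period hperiod)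
    (hint period hperiod T ⟨period_pos.le.trans hT, le_rfl⟩), hhead, htail, add_zero]

end Construction

section OddModes

def oddFreq (k : {k : ℕ // Odd k}) : ℤ := -(k : ℤ) ^ 2

lemma oddFreq_injective : Function.Injective oddFreq := fun i j h =>
  Subtype.ext <| Nat.pow_left_injective two_ne_zero <| by
    simpa [oddFreq] using h

lemma oddFreq_ne_neg_four (k : {k : ℕ // Odd k}) : oddFreq k ≠ -4 := by
  intro h
  have hk : (k : ℕ) = 2 := Nat.pow_left_injective two_ne_zero <| by
    simp only [oddFreq, neg_inj] at h
    exact_mod_cast h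
  exact Nat.not_odd_iff_even.2 even_two (hk ▸ k.2)

lemma exp_lam_mul_sub (k : {k : ℕ // Odd k}) (T s : ℝ) :
    Complex.exp (-Complex.I * (lam k : ℂ) * ((T : ℂ) - (s : ℂ)))
      = Complex.exp (-Complex.I * lam k * T) * en (-oddFreq k) s := by
  rw [en, ← Complex.exp_add]
  congr 1
  simp only [freq, oddFreq, lam]
  push_cast
  ring

variable (T : ℝ) (c : ℕ → ℂ)

def oddCoeff (k : {k : ℕ // Odd k}) : ℂ :=
  c k * Complex.exp (Complex.I * lam k * T) / (Complex.I / √π * period)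

lemma norm_oddCoeff (k : {k : ℕ // Odd k}) : ‖oddCoeff T c k‖ = ‖c k‖ * (√π / period) := by
  have hexp : ‖Complex.exp (Complex.I * lam k * T)‖ = 1 := by
    rw [Complex.norm_exp]; simp
  rw [oddCoeff, norm_div, norm_mul, hexp, norm_mul, norm_div]
  simp only [Complex.norm_I, Complex.norm_real, one_div,
    Real.norm_of_nonneg (Real.sqrt_nonneg π), Real.norm_of_nonneg period_pos.le, mul_one]
  have : 0 < √π := Real.sqrt_pos.2 Real.pi_pos
  field_simp

lemma moment_oddCoeff (k : {k : ℕ // Odd k}) :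
    Complex.I / √π * (Complex.exp (-Complex.I * lam k * T) * (period * oddCoeff T c k)) = c k := by
  have hπ : (√π : ℂ) ≠ 0 := by exact_mod_cast (Real.sqrt_pos.2 Real.pi_pos).ne'
  have hP : (period : ℂ) ≠ 0 := by exact_mod_cast period_pos.ne'
  rw [oddCoeff]
  field_simp
  rw [mul_right_comm, ← Complex.exp_add, neg_add_cancel, Complex.exp_zero, one_mul]

variable {c} (hc : Summable fun k : {k : ℕ // Odd k} => (k : ℝ) ^ 4 * ‖c k‖ ^ 2)
include hc

lemma summable_norm_oddCoeff : Summable fun k => ‖oddCoeff T c k‖ := by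
  simpa only [norm_oddCoeff] using (summable_of_summable_pow_four_mul_sq
    (fun k hk => hk.pos.ne') (fun k => norm_nonneg (c k)) hc).mul_right _

lemma summable_oddFreq_sq_mul_norm_oddCoeff_sq :
    Summable fun k => (oddFreq k : ℝ) ^ 2 * ‖oddCoeff T c k‖ ^ 2 := by
  refine (hc.mul_right ((√π / period) ^ 2)).congr fun k => ?_
  rw [norm_oddCoeff, oddFreq]
  push_cast
  ring

end OddModes

end MomentProblem

open MomentProblem

/-- Let `T ≥ 8π` and `(c_k)_{k∈D}` with `∑_{k∈D} k⁴|c_k|² < ∞`. Then there is a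
continuous `ρ : [0,T] → ℂ` with `ρ(0) = ρ(T) = 0`, which is an `H¹(0,T)` function
(`ρ(t) = ∫₀ᵗ g(s) ds` with `g ∈ L²((0,T),ℂ)`) and satisfies
`c_k = (i/√π) ∫₀ᵀ ρ(s) e^{−iλ_k(T−s)} ds` for all `k ∈ D`. -/
theorem stmt15 (T : ℝ) (hT : 8 * π ≤ T) (c : ℕ → ℂ)
    (hc : Summable (fun k : {k : ℕ // Odd k} => (k.1 : ℝ) ^ 4 * ‖c k.1‖ ^ 2)) :
    ∃ ρ g : ℝ → ℂ,
      ContinuousOn ρ (Icc (0:ℝ) T) ∧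
      ρ 0 = 0 ∧ ρ T = 0 ∧
      MemLp g 2 (volume.restrict (Ioc 0 T)) ∧
      (∀ t ∈ Icc (0:ℝ) T, ρ t = ∫ s in (0:ℝ)..t, g s) ∧
      ∀ k : ℕ, Odd k → c k = (Complex.I / ((Real.sqrt π : ℝ) : ℂ)) *
        ∫ s in (0:ℝ)..T, ρ s * Complex.exp (-Complex.I * (lam k : ℂ) * ((T : ℂ) - (s : ℂ))) := by
  have hT' : period ≤ T := hT
  have hd₁ := summable_norm_oddCoeff T hc
  have hd₂ := summable_oddFreq_sq_mul_norm_oddCoeff_sq T hc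
  refine ⟨rho T oddFreq (-4) (oddCoeff T c), derivLp T oddFreq (-4) (oddCoeff T c),
    continuousOn_rho _, intervalIntegral.integral_same, ?_, Lp.memLp _, fun t _ => rfl, ?_⟩
  · rw [rho_eq_profile _ hT' oddFreq_injective hd₂ hd₁ ⟨period_pos.le.trans hT', le_rfl⟩,
      min_eq_right hT', profile_period]
  · intro k hk
    rw [integral_rho_mul _ hT' oddFreq_injective hd₂ hd₁ (by fun_prop)]
    simp only [exp_lam_mul_sub ⟨k, hk⟩, mul_left_comm _ (Complex.exp _)]
    rw [intervalIntegral.integral_const_mul,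
      integral_profile_mul_en _ oddFreq_injective oddFreq_ne_neg_four hd₁]
    exact (moment_oddCoeff T c ⟨k, hk⟩).symm
end
end

section
/- Let T > 0 and q ∈ L²((0,T),ℂ). For t ∈ [0,T] and k ∈ D set c_k(t) = ∫₀^t q(s) e^{−iλ_k(t−s)} ds. Then for each t the family (c_k(t))_{k∈D} is square-summable, and the map t ↦ (c_k(t))_{k∈D} is continuous from [0,T] into ℓ²(D). -/
open MeasureTheory Set Filter
open scoped Real Topology ENNReal

noncomputable section

/-!
For odd `k = 2m + 1` we have `λ_k = n_k + 1/4` with `n_k = m(m + 1)`, and the `n_k` are distinct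
integers. Extending `q` by zero to `q̃` and substituting `s = t - u`,
`c_k(t) = ∫₀^L e^{-i n_k u} g_t(u) du` with `g_t(u) = q̃(t - u) e^{-iu/4}`, for any `L ≥ T`.
Taking `L ∈ 2πℕ`, the functions `e^{inu}/√L` are orthonormal in `L²(0, L)`, so by Bessel's
inequality `g ↦ (⟨e^{i n_k u}/√L, g⟩)_k` is a bounded linear map `L²(0, L) → ℓ²(D)`. Finally
`t ↦ g_t` is continuous into `L²(0, L)` because translation is continuous in `L²(ℝ)`.
-/

namespace Orthonormal

variable {𝕜 ι H : Type*} [RCLike 𝕜] [NormedAddCommGroup H] [InnerProductSpace 𝕜 H]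
  {w : ι → H}

lemma memℓp_inner (hw : Orthonormal 𝕜 w) (x : H) : Memℓp (fun i => inner 𝕜 (w i) x) 2 :=
  memℓp_gen (by simpa using hw.inner_products_summable x)

def coeffsCLM (hw : Orthonormal 𝕜 w) : H →L[𝕜] lp (fun _ : ι => 𝕜) 2 :=
  LinearMap.mkContinuous
    { toFun x := ⟨fun i => inner 𝕜 (w i) x, hw.memℓp_inner x⟩
      map_add' x y := Subtype.ext <| funext fun i => inner_add_right _ _ _
      map_smul' c x := Subtype.ext <| funext fun i => inner_smul_right _ _ _ }
    1 fun x => by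
      rw [one_mul]
      exact lp.norm_le_of_tsum_le (by norm_num) (norm_nonneg x)
        (by simpa using hw.tsum_inner_products_le x)

end Orthonormal

def expMode (L : ℝ) (n : ℤ) (u : ℝ) : ℂ :=
  ((√L)⁻¹ : ℝ) * Complex.exp (((n * u : ℝ) : ℂ) * Complex.I)

lemma memLp_expMode (L : ℝ) (n : ℤ) : MemLp (expMode L n) 2 (volume.restrict (Ioc 0 L)) :=
  MemLp.of_bound (Continuous.aestronglyMeasurable (by unfold expMode; fun_prop)) (√L)⁻¹ <|
    ae_of_all _ fun u => by
      rw [expMode, norm_mul, Complex.norm_exp_ofReal_mul_I, mul_one, Complex.norm_real,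
        Real.norm_of_nonneg (by positivity)]

def expLp (L : ℝ) (n : ℤ) : Lp ℂ 2 (volume.restrict (Ioc 0 L)) := (memLp_expMode L n).toLp

lemma inner_expLp_toLp (L : ℝ) (n : ℤ) {f : ℝ → ℂ}
    (hf : MemLp f 2 (volume.restrict (Ioc 0 L))) :
    inner ℂ (expLp L n) hf.toLp =
      ((√L)⁻¹ : ℝ) * ∫ u in Ioc 0 L, Complex.exp (-(n * u * Complex.I)) * f u := by
  rw [L2.inner_def, ← integral_const_mul]
  refine integral_congr_ae ?_
  filter_upwards [(memLp_expMode L n).coeFn_toLp, hf.coeFn_toLp] with u h1 h2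
  rw [expLp, h1, h2, RCLike.inner_apply, expMode, map_mul, Complex.conj_ofReal,
    ← Complex.exp_conj]
  simp only [map_mul, Complex.conj_ofReal, Complex.conj_I]
  push_cast
  ring_nf

lemma integral_exp_int_mul_I (M : ℕ) (n : ℤ) :
    ∫ u in (0)..(2 * π * M), Complex.exp (n * u * Complex.I) = if n = 0 then 2 * π * M else 0 := by
  split_ifs with hn
  · simp [hn]
  · have hc : (n : ℂ) * Complex.I ≠ 0 := mul_ne_zero (by exact_mod_cast hn) Complex.I_ne_zero
    simp_rw [mul_right_comm _ _ Complex.I]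
    rw [integral_exp_mul_complex hc]
    have : (n : ℂ) * Complex.I * ((2 * π * M : ℝ) : ℂ) =
        ((n * M : ℤ) : ℂ) * (2 * π * Complex.I) := by
      push_cast; ring
    rw [this, Complex.exp_int_mul_two_pi_mul_I]
    simp

lemma orthonormal_expLp {M : ℕ} (hM : 0 < M) : Orthonormal ℂ (expLp (2 * π * M)) := by
  have hL : 0 < 2 * π * M := by positivity
  rw [orthonormal_iff_ite]
  intro m n
  nth_rw 2 [expLp]
  rw [inner_expLp_toLp, ← intervalIntegral.integral_of_le hL.le]
  have hintegrand : ∀ u : ℝ, Complex.exp (-(m * u * Complex.I)) * expMode (2 * π * M) n u =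
      ((√(2 * π * M))⁻¹ : ℝ) * Complex.exp (((n - m : ℤ) : ℂ) * u * Complex.I) := by
    intro u
    rw [expMode, mul_left_comm, ← Complex.exp_add]
    push_cast; ring_nf
  simp_rw [hintegrand, intervalIntegral.integral_const_mul, integral_exp_int_mul_I, sub_eq_zero,
    eq_comm (a := n)]
  split_ifs
  · rw [← mul_assoc, ← Complex.ofReal_mul, ← mul_inv, Real.mul_self_sqrt hL.le]
    have : (M : ℂ) ≠ 0 := by exact_mod_cast hM.ne'
    push_cast
    field_simp
  · simp

namespace MeasureTheory.MemLp

variable {p : ℝ≥0∞}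

section

variable {E : Type*} [NormedAddCommGroup E] {f : ℝ → E}

lemma comp_sub_left (hf : MemLp f p volume) (t : ℝ) :
    MemLp (fun u => f (t - u)) p volume :=
  hf.comp_measurePreserving (Measure.measurePreserving_sub_left volume t)

lemma continuous_toLp_comp_sub_left [Fact (1 ≤ p)] (hp : p ≠ ∞)
    (hf : MemLp f p volume) : Continuous fun t => (hf.comp_sub_left t).toLp := by
  let subLeft : C(ℝ, C(ℝ, ℝ)) := ContinuousMap.curry ⟨fun x : ℝ × ℝ => x.1 - x.2, by fun_prop⟩
  have hsubLeft (t : ℝ) : MeasurePreserving (subLeft t) volume volume :=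
    Measure.measurePreserving_sub_left volume t
  exact (Lp.compMeasurePreserving_continuous volume volume E hp).comp
    (continuous_const (y := hf.toLp).prodMk (subLeft.continuous.subtype_mk hsubLeft))

end

section

variable {f e : ℝ → ℂ}

lemma comp_sub_left_mul (hf : MemLp f p volume) (he : AEStronglyMeasurable e volume)
    (he1 : ∀ u, ‖e u‖ ≤ 1) (s : Set ℝ) (t : ℝ) :
    MemLp (fun u => f (t - u) * e u) p (volume.restrict s) :=
  ((hf.comp_sub_left t).restrict s).of_le
    ((hf.comp_sub_left t).1.restrict.mul he.restrict)
    (ae_of_all _ fun u => by simpa [norm_mul] using mul_le_of_le_one_right (norm_nonneg _) (he1 u))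

lemma continuous_toLp_comp_sub_left_mul [Fact (1 ≤ p)] (hp : p ≠ ∞)
    (hf : MemLp f p volume) (he : AEStronglyMeasurable e volume) (he1 : ∀ u, ‖e u‖ ≤ 1)
    (s : Set ℝ) :
    Continuous fun t => (hf.comp_sub_left_mul he he1 s t).toLp := by
  have hdist (t t' : ℝ) : dist (hf.comp_sub_left_mul he he1 s t).toLp
      (hf.comp_sub_left_mul he he1 s t').toLp ≤
      dist (hf.comp_sub_left t).toLp (hf.comp_sub_left t').toLp := by
    simp only [dist_edist, Lp.edist_toLp_toLp]
    refine ENNReal.toReal_mono ((hf.comp_sub_left t).sub (hf.comp_sub_left t')).eLpNorm_ne_top ?_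
    calc eLpNorm ((fun u => f (t - u) * e u) - fun u => f (t' - u) * e u) p (volume.restrict s)
        ≤ eLpNorm ((fun u => f (t - u)) - fun u => f (t' - u)) p (volume.restrict s) :=
          eLpNorm_mono fun u => by
            simpa [← sub_mul, norm_mul] using mul_le_of_le_one_right (norm_nonneg _) (he1 u)
      _ ≤ _ := eLpNorm_mono_measure _ Measure.restrict_le_self
  have hcont := hf.continuous_toLp_comp_sub_left hp
  rw [Metric.continuous_iff] at hcont ⊢
  intro t ε hε
  obtain ⟨δ, hδ, h⟩ := hcont t ε hε
  exact ⟨δ, hδ, fun t' ht' => (hdist t' t).trans_lt (h t' ht')⟩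

end

end MeasureTheory.MemLp

lemma integral_Ioc_indicator_comp_sub_mul {T L t : ℝ} (ht : t ∈ Icc 0 T) (hTL : T ≤ L)
    (f K : ℝ → ℂ) :
    ∫ u in Ioc 0 L, (Ioc 0 T).indicator f (t - u) * K u = ∫ s in 0..t, f s * K (t - s) := by
  have hsupp : (Ioc 0 L).indicator (fun u => (Ioc 0 T).indicator f (t - u) * K u) =
      (Ioc 0 t).indicator (fun u => (Ioc 0 T).indicator f (t - u) * K u) := by
    ext u
    simp only [indicator_apply, mem_Ioc]
    obtain ⟨ht0, htT⟩ := ht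
    split_ifs <;> grind
  rw [← integral_indicator measurableSet_Ioc, hsupp, integral_indicator measurableSet_Ioc,
    ← intervalIntegral.integral_of_le ht.1]
  have hsubst := intervalIntegral.integral_comp_sub_left
    (fun s => (Ioc 0 T).indicator f s * K (t - s)) (a := 0) (b := t) t
  simp only [sub_sub_cancel, sub_self, sub_zero] at hsubst
  rw [hsubst]
  refine intervalIntegral.integral_congr_ae (ae_of_all _ fun s hs => ?_)
  rw [uIoc_of_le ht.1] at hs
  rw [indicator_of_mem (Ioc_subset_Ioc_right ht.2 hs)]

lemma exists_nat_pos_le_two_pi_mul (T : ℝ) : ∃ M : ℕ, 0 < M ∧ T ≤ 2 * π * M := by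
  obtain ⟨M, hM⟩ := exists_nat_ge (T / (2 * π))
  refine ⟨M + 1, M.succ_pos, ?_⟩
  rw [div_le_iff₀ (by positivity)] at hM
  push_cast
  nlinarith [Real.pi_pos]

def oddFreq (k : ℕ) : ℕ := k / 2 * (k / 2 + 1)

lemma lam_eq_oddFreq_add {k : ℕ} (hk : Odd k) : lam k = oddFreq k + 1 / 4 := by
  obtain ⟨m, rfl⟩ := hk
  have : (2 * m + 1) / 2 = m := by omega
  rw [lam, oddFreq, this]
  push_cast
  ring

lemma strictMono_oddFreq : StrictMono fun k : {k : ℕ // Odd k} => oddFreq k := by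
  rintro ⟨j, a, rfl⟩ ⟨k, b, rfl⟩ hjk
  have hab : a < b := by change 2 * a + 1 < 2 * b + 1 at hjk; omega
  have hj : (2 * a + 1) / 2 = a := by omega
  have hk : (2 * b + 1) / 2 = b := by omega
  simp only [oddFreq, hj, hk]
  exact Nat.mul_lt_mul'' hab (by omega)

lemma integral_eq_sqrt_mul_inner_expLp {T L t : ℝ} (ht : t ∈ Icc 0 T) (hTL : T ≤ L) (hL : 0 < L)
    (q : ℝ → ℂ) {k : ℕ} (hk : Odd k)
    (hg : MemLp (fun u => (Ioc 0 T).indicator q (t - u) *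
      Complex.exp (((-(u / 4) : ℝ) : ℂ) * Complex.I)) 2 (volume.restrict (Ioc 0 L))) :
    ∫ s in (0:ℝ)..t, q s * Complex.exp (-Complex.I * (lam k : ℂ) * ((t:ℂ) - (s:ℂ))) =
      (√L : ℂ) * inner ℂ (expLp L (oddFreq k)) hg.toLp := by
  rw [inner_expLp_toLp, ← mul_assoc, ← Complex.ofReal_mul,
    mul_inv_cancel₀ (Real.sqrt_pos.2 hL).ne', Complex.ofReal_one, one_mul]
  have hsubst := integral_Ioc_indicator_comp_sub_mul ht hTL q
    fun u => Complex.exp (-Complex.I * (lam k : ℂ) * u)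
  simp only [Complex.ofReal_sub] at hsubst
  rw [← hsubst]
  refine integral_congr_ae (ae_of_all _ fun u => ?_)
  simp only
  rw [mul_left_comm, ← Complex.exp_add, lam_eq_oddFreq_add hk]
  push_cast
  ring_nf

theorem stmt17_general (T : ℝ) (q : ℝ → ℂ)
    (hq : MemLp q 2 (volume.restrict (Ioc 0 T))) :
    (∀ t ∈ Icc (0:ℝ) T, Memℓp (fun k : {k : ℕ // Odd k} =>
      ∫ s in (0:ℝ)..t, q s * Complex.exp (-Complex.I * (lam k.1 : ℂ) * ((t:ℂ) - (s:ℂ)))) 2) ∧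
    ∃ φ : ℝ → lp (fun _ : {k : ℕ // Odd k} => ℂ) 2,
      (∀ t ∈ Icc (0:ℝ) T, ∀ k : {k : ℕ // Odd k},
        (φ t : ∀ _ : {k : ℕ // Odd k}, ℂ) k =
          ∫ s in (0:ℝ)..t, q s * Complex.exp (-Complex.I * (lam k.1 : ℂ) * ((t:ℂ) - (s:ℂ)))) ∧
      ContinuousOn φ (Icc (0:ℝ) T) := by
  have hf : MemLp ((Ioc 0 T).indicator q) 2 volume :=
    (memLp_indicator_iff_restrict measurableSet_Ioc).2 hq
  have he : AEStronglyMeasurable (fun u : ℝ => Complex.exp (((-(u / 4) : ℝ) : ℂ) * Complex.I))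
      volume := by fun_prop
  have he1 (u : ℝ) : ‖Complex.exp (((-(u / 4) : ℝ) : ℂ) * Complex.I)‖ ≤ 1 :=
    (Complex.norm_exp_ofReal_mul_I _).le
  obtain ⟨M, hM, hTL⟩ := exists_nat_pos_le_two_pi_mul T
  set L := 2 * π * M
  have hL : 0 < L := by positivity
  have hw : Orthonormal ℂ fun k : {k : ℕ // Odd k} => expLp L (oddFreq k) :=
    (orthonormal_expLp hM).comp _ (Nat.cast_injective.comp strictMono_oddFreq.injective)
  let φ t := (√L : ℂ) • hw.coeffsCLM (hf.comp_sub_left_mul he he1 (Ioc 0 L) t).toLp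
  have hφ : ∀ t ∈ Icc 0 T, ∀ k : {k : ℕ // Odd k}, φ t k =
      ∫ s in (0:ℝ)..t, q s * Complex.exp (-Complex.I * (lam k.1 : ℂ) * ((t:ℂ) - (s:ℂ))) :=
    fun t ht k => (integral_eq_sqrt_mul_inner_expLp ht hTL hL q k.2 _).symm
  refine ⟨fun t ht => funext (hφ t ht) ▸ (φ t).2, φ, hφ, Continuous.continuousOn ?_⟩
  exact (hw.coeffsCLM.continuous.comp <|
    hf.continuous_toLp_comp_sub_left_mul (by norm_num) he he1 _).const_smul (√L : ℂ)

/-- Let `T > 0` and `q ∈ L²((0,T),ℂ)`. With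
`c_k(t) = ∫₀ᵗ q(s) e^{−iλ_k(t−s)} ds` for `k ∈ D`, the family `(c_k(t))_{k∈D}` is
square-summable for each `t ∈ [0,T]`, and `t ↦ (c_k(t))_{k∈D}` is continuous from `[0,T]`
into `ℓ²(D)`. -/
theorem stmt17 (T : ℝ) (hT : 0 < T) (q : ℝ → ℂ)
    (hq : MemLp q 2 (volume.restrict (Ioc 0 T))) :
    (∀ t ∈ Icc (0:ℝ) T, Memℓp (fun k : {k : ℕ // Odd k} =>
      ∫ s in (0:ℝ)..t, q s * Complex.exp (-Complex.I * (lam k.1 : ℂ) * ((t:ℂ) - (s:ℂ)))) 2) ∧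
    ∃ φ : ℝ → lp (fun _ : {k : ℕ // Odd k} => ℂ) 2,
      (∀ t ∈ Icc (0:ℝ) T, ∀ k : {k : ℕ // Odd k},
        (φ t : ∀ _ : {k : ℕ // Odd k}, ℂ) k =
          ∫ s in (0:ℝ)..t, q s * Complex.exp (-Complex.I * (lam k.1 : ℂ) * ((t:ℂ) - (s:ℂ)))) ∧
      ContinuousOn φ (Icc (0:ℝ) T) :=
  stmt17_general T q hq
end
end
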